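/- For every θ ∈ Θ one has Γ(θ) = t_c(θ), and consequently for every t ∈ ℝ the bifurcation set satisfies S_t = {θ ∈ Θ : Γ(θ) = t}. -/

import Mathlib

open MeasureTheory Filter Topology

/-- The general setting of the paper: a measurable base system with invertible
driving map `T`, a concave fibre function `h` (with its derivative `h'` on `[0,∞)`)
and a bounded measurable positive function `g`. -/
structure Setting (Θ : Type*) [MeasurableSpace Θ] where
  T : Θ → Θ
  Tinv : Θ → Θ
  left_inv : Function.LeftInverse Tinv T
  right_inv : Function.RightInverse Tinv T
  T_meas : Measurable T
  Tinv_meas : Measurable Tinv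
  h : ℝ → ℝ
  h' : ℝ → ℝ
  h_hasDeriv : ∀ x ∈ Set.Ici (0 : ℝ), HasDerivWithinAt h (h' x) (Set.Ici 0) x
  h'_cont : ContinuousOn h' (Set.Ici 0)
  h_strictConcave : StrictConcaveOn ℝ (Set.Ici 0) h
  h_zero : h 0 = 0
  h'_pos : ∀ x : ℝ, 0 < x → 0 < h' x
  h'_zero : h' 0 = 1
  h_sublinear : Tendsto (fun x => h x / x) atTop (𝓝 0)
  g : Θ → ℝ
  g_pos : ∀ θ, 0 < g θ
  g_bdd : ∃ C : ℝ, ∀ θ, g θ ≤ C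
  g_meas : Measurable g

namespace Setting

variable {Θ : Type*} [MeasurableSpace Θ]

/-- The fibre maps `f_t(θ,x) = e^{-t} g(θ) h(x)`. -/
noncomputable def f (S : Setting Θ) (t : ℝ) (θ : Θ) (x : ℝ) : ℝ :=
  Real.exp (-t) * S.g θ * S.h x

/-- The iterated fibre maps: `fn t 0 θ x = x` and
`fn t (n+1) θ x = f t (T^[n] θ) (fn t n θ x)`, so that `fn t 1 = f t`. -/
noncomputable def fn (S : Setting Θ) (t : ℝ) : ℕ → Θ → ℝ → ℝ
  | 0, _, x => x
  | n + 1, θ, x => S.f t (S.T^[n] θ) (S.fn t n θ x)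

/-- `ψ_{t,n}(θ) = f_t^n(T^{-n}θ, M)`. -/
noncomputable def ψ (S : Setting Θ) (t M : ℝ) (n : ℕ) (θ : Θ) : ℝ :=
  S.fn t n (S.Tinv^[n] θ) M

/-- The maximal invariant function `φ_t(θ) = inf_{n ≥ 1} ψ_{t,n}(θ)`. -/
noncomputable def φ (S : Setting Θ) (t M : ℝ) (θ : Θ) : ℝ :=
  ⨅ n : ℕ, S.ψ t M (n + 1) θ

/-- The zero set `N_t = {θ : φ_t(θ) = 0}`. -/
noncomputable def Nset (S : Setting Θ) (t M : ℝ) : Set Θ := {θ | S.φ t M θ = 0}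

/-- The critical parameter `t_c(θ) = inf {t : φ_t(θ) = 0}`. -/
noncomputable def tc (S : Setting Θ) (M : ℝ → ℝ) (θ : Θ) : ℝ :=
  sInf {t : ℝ | S.φ t (M t) θ = 0}

/-- The bifurcation set `S_t = {θ : t_c(θ) = t}`. -/
noncomputable def Sset (S : Setting Θ) (M : ℝ → ℝ) (t : ℝ) : Set Θ :=
  {θ | S.tc M θ = t}

/-- The Birkhoff average `Γ^{(n)}(θ) = (1/n) ∑_{k=1}^n log g(T^{-k}θ)`. -/
noncomputable def Γn (S : Setting Θ) (n : ℕ) (θ : Θ) : ℝ :=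
  (∑ k ∈ Finset.range n, Real.log (S.g (S.Tinv^[k + 1] θ))) / n

/-- The lower backwards Lyapunov average `Γ(θ) = liminf_n Γ^{(n)}(θ)`. -/
noncomputable def Γ (S : Setting Θ) (θ : Θ) : ℝ :=
  Filter.liminf (fun n : ℕ => S.Γn n θ) Filter.atTop

/-- The averaged exponent `γ(μ) = ∫ log g dμ`. -/
noncomputable def γfn (S : Setting Θ) (μ : Measure Θ) : ℝ :=
  ∫ θ, Real.log (S.g θ) ∂μ

/-- The function `H(x) = log (h(x)/x)`. -/
noncomputable def Hfn (S : Setting Θ) (x : ℝ) : ℝ := Real.log (S.h x / x)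

end Setting

/-!
Let `Q_n(θ) = ∑_{k=1}^n log (e^{-t} g(T^{-k}θ)) = n (Γ^{(n)}(θ) - t)`. Since `h(x) ≤ x`, we have
`ψ_{t,n}(θ) ≤ e^{Q_n(θ)} M_t`, so `φ_t(θ) = 0` as soon as `Q_n(θ) ≤ -εn` infinitely often, which
happens for every `t > Γ(θ)`. For `t < Γ(θ)` instead `Q_k(θ) ≥ εk + B` for all `k`; as
`h(x) ≥ e^{-ε} x` on some `[0, δ]`, the barrier `b_k = min(δ, h(δ) e^{ε(k+1) + B - Q_k(θ)})` is a
subsolution along the backward orbit, and it bounds every `ψ_{t,n}(θ)` below by `b_0 > 0`.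
Thus `{t : φ_t(θ) = 0}` contains `(Γ(θ), ∞)` and misses `(-∞, Γ(θ))`, so its infimum is `Γ(θ)`.
-/

open Set

/-- This also covers `A = ∅` and `A` unbounded above, where both sides are the junk value `0`. -/
lemma Real.sInf_eq_sSup_of_separating {A Z : Set ℝ} (hA : ∀ a ∈ A, ∀ t < a, t ∉ Z)
    (hZ : ∀ a ∉ A, ∀ t, a < t → t ∈ Z) : sInf Z = sSup A := by
  by_cases hAb : BddAbove A
  · rcases A.eq_empty_or_nonempty with rfl | hne
    · have hZ_univ : Z = univ :=
        eq_univ_of_forall fun t => hZ (t - 1) (notMem_empty _) t (by linarith)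
      rw [hZ_univ, Real.sSup_empty]
      exact Real.sInf_of_not_bddBelow not_bddBelow_univ
    · have hgt : ∀ w, sSup A < w → w ∈ Z := fun w hw =>
        hZ ((sSup A + w) / 2) (fun hm => by linarith [le_csSup hAb hm]) w (by linarith)
      refine csInf_eq_of_forall_ge_of_forall_gt_exists_lt ⟨_, hgt (sSup A + 1) (by linarith)⟩
        (fun z hz => ?_) fun w hw => ⟨(sSup A + w) / 2, hgt _ (by linarith), by linarith⟩
      by_contra! hlt
      obtain ⟨a, ha, hza⟩ := exists_lt_of_lt_csSup hne hlt
      exact hA a ha z hza hz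
  · have hZ_empty : Z = ∅ := eq_empty_of_forall_notMem fun t ht => by
      obtain ⟨a, ha, hta⟩ := not_bddAbove_iff.1 hAb t
      exact hA a ha t hta ht
    rw [hZ_empty, Real.sInf_empty, Real.sSup_of_not_bddAbove hAb]

namespace Setting

variable {Θ : Type*} [MeasurableSpace Θ] (S : Setting Θ)

lemma h_monotoneOn : MonotoneOn S.h (Ici 0) := by
  refine monotoneOn_of_hasDerivWithinAt_nonneg (f' := S.h') (convex_Ici 0)
    (fun x hx => (S.h_hasDeriv x hx).continuousWithinAt) (fun x hx => ?_) fun x hx => ?_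
  · rw [interior_Ici] at hx ⊢
    exact (S.h_hasDeriv x (mem_Ici.2 (le_of_lt hx))).mono Ioi_subset_Ici_self
  · rw [interior_Ici] at hx
    exact (S.h'_pos x hx).le

lemma h_nonneg {x : ℝ} (hx : 0 ≤ x) : 0 ≤ S.h x :=
  S.h_zero ▸ S.h_monotoneOn self_mem_Ici hx hx

lemma h_le_self {x : ℝ} (hx : 0 ≤ x) : S.h x ≤ x := by
  rcases hx.eq_or_lt with rfl | hx
  · rw [S.h_zero]
  · have hslope := S.h_strictConcave.concaveOn.slope_le_of_hasDerivWithinAt self_mem_Ici hx.le hx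
      (S.h_hasDeriv 0 self_mem_Ici)
    rwa [slope_def_field, S.h_zero, S.h'_zero, sub_zero, sub_zero, div_le_one hx] at hslope

lemma eventually_mul_le_h {c : ℝ} (hc : c < 1) : ∀ᶠ x in 𝓝[>] 0, c * x ≤ S.h x := by
  have hslope : Tendsto (slope S.h 0) (𝓝[>] 0) (𝓝 1) := S.h'_zero ▸
    (hasDerivWithinAt_iff_tendsto_slope' (lt_irrefl 0)).1 (S.h_hasDeriv 0 self_mem_Ici).Ioi_of_Ici
  filter_upwards [hslope.eventually (eventually_gt_nhds hc), self_mem_nhdsWithin] with x hx hx0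
  rw [slope_def_field, S.h_zero, sub_zero, sub_zero, lt_div_iff₀ hx0] at hx
  exact hx.le

noncomputable def logMultiplier (t : ℝ) (θ : Θ) : ℝ := Real.log (S.g (S.Tinv θ)) - t

lemma f_Tinv (t : ℝ) (θ : Θ) (x : ℝ) :
    S.f t (S.Tinv θ) x = Real.exp (S.logMultiplier t θ) * S.h x := by
  rw [logMultiplier, sub_eq_neg_add, Real.exp_add, Real.exp_log (S.g_pos _)]
  rfl

lemma birkhoffSum_logMultiplier (t : ℝ) (n : ℕ) (θ : Θ) :
    birkhoffSum S.Tinv (S.logMultiplier t) n θ = n * (S.Γn n θ - t) := by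
  rcases n.eq_zero_or_pos with rfl | hn
  · simp
  · simp only [birkhoffSum, logMultiplier, Γn, Finset.sum_sub_distrib, Finset.sum_const,
      Finset.card_range, nsmul_eq_mul, Function.iterate_succ_apply']
    field_simp

lemma ψ_succ (t M : ℝ) (n : ℕ) (θ : Θ) :
    S.ψ t M (n + 1) θ = S.f t (S.Tinv θ) (S.ψ t M n (S.Tinv θ)) := by
  simp only [ψ, fn, Function.iterate_succ_apply, S.right_inv.iterate n (S.Tinv θ)]

lemma ψ_nonneg {M : ℝ} (hM : 0 ≤ M) (t : ℝ) (n : ℕ) (θ : Θ) : 0 ≤ S.ψ t M n θ := by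
  induction n generalizing θ with
  | zero => exact hM
  | succ n ih =>
    rw [ψ_succ, f_Tinv]
    exact mul_nonneg (Real.exp_pos _).le (S.h_nonneg (ih _))

lemma ψ_le_exp_birkhoffSum_mul {M : ℝ} (hM : 0 ≤ M) (t : ℝ) (n : ℕ) (θ : Θ) :
    S.ψ t M n θ ≤ Real.exp (birkhoffSum S.Tinv (S.logMultiplier t) n θ) * M := by
  induction n generalizing θ with
  | zero => simp [ψ, fn]
  | succ n ih =>
    rw [ψ_succ, f_Tinv, birkhoffSum_succ', Real.exp_add, mul_assoc]
    gcongr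
    exact (S.h_le_self (S.ψ_nonneg hM t n _)).trans (ih _)

lemma φ_le_ψ {M : ℝ} (hM : 0 ≤ M) (t : ℝ) {n : ℕ} (hn : n ≠ 0) (θ : Θ) :
    S.φ t M θ ≤ S.ψ t M n θ := by
  obtain ⟨m, rfl⟩ := Nat.exists_eq_succ_of_ne_zero hn
  exact ciInf_le ⟨0, by rintro _ ⟨k, rfl⟩; exact S.ψ_nonneg hM t _ θ⟩ m

lemma φ_nonneg {M : ℝ} (hM : 0 ≤ M) (t : ℝ) (θ : Θ) : 0 ≤ S.φ t M θ :=
  le_ciInf fun _ => S.ψ_nonneg hM t _ θ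

lemma φ_eq_zero_of_frequently_Γn_lt {t M a : ℝ} {θ : Θ} (hM : 0 ≤ M) (hat : a < t)
    (hfreq : ∃ᶠ n in atTop, S.Γn n θ < a) : S.φ t M θ = 0 := by
  have hlim : Tendsto (fun n : ℕ => Real.exp (a - t) ^ n * M) atTop (𝓝 0) := by
    simpa using (tendsto_pow_atTop_nhds_zero_of_lt_one (Real.exp_pos _).le
      (Real.exp_lt_one_iff.2 (sub_neg.2 hat))).mul_const M
  refine le_antisymm (ge_of_tendsto_of_frequently hlim ?_) (S.φ_nonneg hM t θ)
  refine (hfreq.and_eventually (eventually_ne_atTop 0)).mono fun n ⟨hlt, hn⟩ => ?_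
  calc S.φ t M θ ≤ S.ψ t M n θ := S.φ_le_ψ hM t hn θ
    _ ≤ Real.exp (n * (S.Γn n θ - t)) * M := by
        simpa only [birkhoffSum_logMultiplier] using S.ψ_le_exp_birkhoffSum_mul hM t n θ
    _ ≤ Real.exp (a - t) ^ n * M := by
        rw [← Real.exp_nat_mul]
        gcongr

lemma le_ψ_of_le_exp_mul_h {t M : ℝ} {θ : Θ} {b : ℕ → ℝ} (hb0 : ∀ k, 0 ≤ b k)
    (hbM : ∀ k, b k ≤ M)
    (hb : ∀ k, b k ≤ Real.exp (S.logMultiplier t (S.Tinv^[k] θ)) * S.h (b (k + 1))) (m k : ℕ) :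
    b k ≤ S.ψ t M m (S.Tinv^[k] θ) := by
  induction m generalizing k with
  | zero => exact hbM k
  | succ m ih =>
    rw [ψ_succ, f_Tinv, ← Function.iterate_succ_apply' S.Tinv k θ]
    refine (hb k).trans (mul_le_mul_of_nonneg_left ?_ (Real.exp_pos _).le)
    exact S.h_monotoneOn (hb0 _) (S.ψ_nonneg ((hb0 0).trans (hbM 0)) t m _) (ih (k + 1))

lemma min_le_exp_mul_h_min {δ ε a a' ℓ : ℝ} (hδ : 0 < δ)
    (hh : ∀ x ∈ Icc 0 δ, Real.exp (-ε) * x ≤ S.h x) (ha : a ≤ ℓ) (ha' : a ≤ ℓ - ε + a') :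
    min δ (S.h δ * Real.exp a) ≤ Real.exp ℓ * S.h (min δ (S.h δ * Real.exp a')) := by
  have hhδ : 0 ≤ S.h δ := S.h_nonneg hδ.le
  refine (min_le_right _ _).trans ?_
  rcases le_total δ (S.h δ * Real.exp a') with hδa' | hδa'
  · rw [min_eq_left hδa', mul_comm]
    gcongr
  · rw [min_eq_right hδa']
    calc S.h δ * Real.exp a ≤ Real.exp ℓ * (Real.exp (-ε) * (S.h δ * Real.exp a')) := by
          rw [mul_left_comm, ← mul_assoc, ← Real.exp_add, mul_left_comm, ← Real.exp_add]
          gcongr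
          linarith
      _ ≤ Real.exp ℓ * S.h (S.h δ * Real.exp a') := by
          gcongr
          exact hh _ ⟨by positivity, hδa'⟩

lemma φ_pos_of_le_birkhoffSum {t M ε B : ℝ} {θ : Θ} (hM : 0 < M) (hε : 0 < ε)
    (hQ : ∀ k : ℕ, ε * k + B ≤ birkhoffSum S.Tinv (S.logMultiplier t) k θ) :
    0 < S.φ t M θ := by
  obtain ⟨u, hu, hIoc⟩ := mem_nhdsGT_iff_exists_Ioc_subset.1
    (S.eventually_mul_le_h (Real.exp_lt_one_iff.2 (neg_lt_zero.2 hε)))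
  set δ := min u M
  have hδ : 0 < δ := lt_min hu hM
  have hh : ∀ x ∈ Icc 0 δ, Real.exp (-ε) * x ≤ S.h x := by
    rintro x ⟨hx0, hxδ⟩
    rcases hx0.eq_or_lt with rfl | hx0
    · simp [S.h_zero]
    · exact hIoc ⟨hx0, hxδ.trans (min_le_left _ _)⟩
  set Q := birkhoffSum S.Tinv (S.logMultiplier t)
  set b : ℕ → ℝ := fun k => min δ (S.h δ * Real.exp (ε * (k + 1) + B - Q k θ))
  have hhδ : 0 < S.h δ := (mul_pos (Real.exp_pos _) hδ).trans_le (hh δ ⟨hδ.le, le_rfl⟩)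
  have hb0 : ∀ k, 0 < b k := fun k => lt_min hδ (mul_pos hhδ (Real.exp_pos _))
  have hb : ∀ k, b k ≤ Real.exp (S.logMultiplier t (S.Tinv^[k] θ)) * S.h (b (k + 1)) := by
    intro k
    have hQ_succ := birkhoffSum_succ S.Tinv (S.logMultiplier t) k θ
    refine S.min_le_exp_mul_h_min hδ hh ?_ ?_
    · have hQ_next := hQ (k + 1)
      push_cast at hQ_next
      linarith
    · push_cast
      linarith
  refine (hb0 0).trans_le (le_ciInf fun n => ?_)
  have hbM : ∀ k, b k ≤ M := fun k => (min_le_left _ _).trans (min_le_right _ _)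
  exact S.le_ψ_of_le_exp_mul_h (fun k => (hb0 k).le) hbM hb (n + 1) 0

lemma φ_pos_of_eventually_le_Γn {t M a : ℝ} {θ : Θ} (hM : 0 < M) (hta : t < a)
    (hev : ∀ᶠ n in atTop, a ≤ S.Γn n θ) : 0 < S.φ t M θ := by
  have hev' : ∀ᶠ n : ℕ in atTop,
      0 ≤ birkhoffSum S.Tinv (S.logMultiplier t) n θ - (a - t) * n := by
    filter_upwards [hev] with n hn
    rw [birkhoffSum_logMultiplier]
    nlinarith [(Nat.cast_nonneg n : (0 : ℝ) ≤ n)]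
  obtain ⟨B, hB⟩ := (isBoundedUnder_of_eventually_ge hev').bddBelow_range
  exact S.φ_pos_of_le_birkhoffSum (B := B) hM (sub_pos.2 hta) fun k => by
    linarith [hB ⟨k, rfl⟩]

end Setting

theorem stmt6_general {Θ : Type*} [MeasurableSpace Θ] (S : Setting Θ) (M : ℝ → ℝ)
    (hM : ∀ t, 0 < M t) :
    (∀ θ : Θ, S.Γ θ = S.tc M θ) ∧
    (∀ t : ℝ, S.Sset M t = {θ : Θ | S.Γ θ = t}) := by
  have hΓ_tc : ∀ θ, S.Γ θ = S.tc M θ := fun θ =>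
    (Real.sInf_eq_sSup_of_separating
      (fun a ha t hta => (S.φ_pos_of_eventually_le_Γn (hM t) hta ha).ne')
      fun a ha t hat => S.φ_eq_zero_of_frequently_Γn_lt (hM t).le hat
        ((not_eventually.1 ha).mono fun _ => lt_of_not_ge)).symm
  refine ⟨hΓ_tc, fun t => ?_⟩
  ext θ
  show S.tc M θ = t ↔ S.Γ θ = t
  rw [hΓ_tc]

/-- `Γ(θ) = t_c(θ)` for every `θ`, and `S_t = {θ : Γ(θ) = t}` for every `t`. -/
theorem stmt6 {Θ : Type*} [MeasurableSpace Θ] (S : Setting Θ) (M : ℝ → ℝ)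
    (hM : ∀ t, 0 < M t) (hMf : ∀ t θ, S.f t θ (M t) < M t) :
    (∀ θ : Θ, S.Γ θ = S.tc M θ) ∧
    (∀ t : ℝ, S.Sset M t = {θ : Θ | S.Γ θ = t}) :=
  stmt6_general S M hM
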